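/- arXiv:1002.4799 — 8 statements merged into one kernel-verified Lean document; each statement's English description precedes it below -/
import Mathlib

section
/- Let g be a Lie algebra over a field k and let r : g → n_n(k) be a Lie algebra homomorphism, regarded as a representation of g on k^n. Then the associated filtration Fil^r equals the standard flag 0 ⊂ k^1 ⊂ k^2 ⊂ ⋯ ⊂ k^n (i.e. r is a flag representation) if and only if the functional λ_{i,i+1} : g → k is nonzero (equivalently, surjective) for every i = 1, …, n−1. -/
/-!
The standard flag is always contained in `Fil`, because a strictly upper triangular matrix maps
`k^(i+1)` into `k^i`. On `k^(m+2)` the `m`-th coordinate of `M x` is `M m (m+1) * x (m+1)`, so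
such an `M` maps `x` into `k^m` iff `M m (m+1) * x (m+1) = 0`. If some `λ_{i,i+1}` vanishes, the
basis vector `e_{i+1}` therefore lies in `Fil (i+1)` but not in `k^(i+1)`. Conversely, if none
vanishes, a vector of `Fil (i+1)` has its coordinates `≥ i+1` killed one at a time, from the top
down.
-/

/-- The standard flag in `Fin n → k`: `stdFlag k n i` consists of the vectors supported in the
first `i` coordinates, i.e. it is `k^i ⊆ k^n`. -/
def stdFlag (k : Type*) [Field k] (n i : ℕ) : Submodule k (Fin n → k) where
  carrier := {x | ∀ j : Fin n, i ≤ (j : ℕ) → x j = 0}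
  add_mem' := by
    intro a b ha hb j hj
    simp [ha j hj, hb j hj]
  zero_mem' := fun j _ => rfl
  smul_mem' := by
    intro c a ha j hj
    simp [ha j hj]

attribute [local instance 100] LieRing.ofAssociativeRing

namespace stdFlag

variable {k : Type*} [Field k] {n : ℕ}

theorem zero_eq_bot : stdFlag k n 0 = ⊥ := by
  refine eq_bot_iff.2 fun x hx => ?_
  exact (Submodule.mem_bot k).2 (funext fun j => hx j (Nat.zero_le _))

theorem monotone : Monotone (stdFlag k n) :=
  fun _ _ hij _ hx l hl => hx l (hij.trans hl)

theorem mem_succ_iff {m : ℕ} {x : Fin n → k} (hm : m < n) :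
    x ∈ stdFlag k n m ↔ x ∈ stdFlag k n (m + 1) ∧ x ⟨m, hm⟩ = 0 := by
  refine ⟨fun hx => ⟨monotone m.le_succ hx, hx _ le_rfl⟩, fun ⟨hx, hxm⟩ j hj => ?_⟩
  rcases hj.eq_or_lt with hj | hj
  · rwa [show j = ⟨m, hm⟩ from Fin.ext hj.symm]
  · exact hx j hj

theorem single_mem (j : Fin n) (c : k) : Pi.single j c ∈ stdFlag k n (j + 1) :=
  fun l hl => Pi.single_eq_of_ne (fun h : l = j => by rw [h] at hl; omega) _

theorem single_one_notMem (j : Fin n) : Pi.single j (1 : k) ∉ stdFlag k n j :=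
  fun h => one_ne_zero (α := k) (by simpa using h j le_rfl)

theorem mem_of_forall_lt {i : ℕ} {x : Fin n → k} (hi : i ≤ n)
    (step : ∀ m < n, i ≤ m → x ∈ stdFlag k n (m + 1) → x ∈ stdFlag k n m) :
    x ∈ stdFlag k n i :=
  Nat.decreasingInduction' step hi fun j hj => absurd j.isLt (not_lt.2 hj)

variable {M : Matrix (Fin n) (Fin n) k}

theorem mulVec_mem (hM : ∀ i j, j ≤ i → M i j = 0) {i : ℕ} {x : Fin n → k}
    (hx : x ∈ stdFlag k n (i + 1)) : M.mulVec x ∈ stdFlag k n i := by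
  intro j hj
  simp only [Matrix.mulVec, dotProduct]
  refine Finset.sum_eq_zero fun l _ => ?_
  by_cases hlj : (l : ℕ) ≤ j
  · simp [hM j l hlj]
  · simp [hx l (by omega)]

theorem mulVec_apply_of_mem {m : ℕ} (hM : ∀ i j, j ≤ i → M i j = 0) {x : Fin n → k}
    (hm : m + 1 < n) (hx : x ∈ stdFlag k n (m + 2)) :
    M.mulVec x ⟨m, hm.le⟩ = M ⟨m, hm.le⟩ ⟨m + 1, hm⟩ * x ⟨m + 1, hm⟩ := by
  simp only [Matrix.mulVec, dotProduct]
  refine Finset.sum_eq_single _ (fun l _ hl => ?_) (fun h => absurd (Finset.mem_univ _) h)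
  by_cases hlm : (l : ℕ) ≤ m
  · simp [hM ⟨m, hm.le⟩ l hlm]
  · simp [hx l (by have : (l : ℕ) ≠ m + 1 := fun h => hl (Fin.ext h); omega)]

theorem mulVec_mem_iff {m : ℕ} (hM : ∀ i j, j ≤ i → M i j = 0) {x : Fin n → k}
    (hm : m + 1 < n) (hx : x ∈ stdFlag k n (m + 2)) :
    M.mulVec x ∈ stdFlag k n m ↔ M ⟨m, hm.le⟩ ⟨m + 1, hm⟩ * x ⟨m + 1, hm⟩ = 0 := by
  rw [mem_succ_iff (by omega), mulVec_apply_of_mem hM hm hx]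
  exact and_iff_right (mulVec_mem hM hx)

end stdFlag

structure IsAssociatedFiltration {k : Type*} [Field k] {ι : Type*} {n : ℕ}
    (ρ : ι → Matrix (Fin n) (Fin n) k) (Fil : ℕ → Submodule k (Fin n → k)) : Prop where
  zero : Fil 0 = ⊥
  mem_succ_iff (i : ℕ) (x : Fin n → k) : x ∈ Fil (i + 1) ↔ ∀ v, (ρ v).mulVec x ∈ Fil i

namespace IsAssociatedFiltration

variable {k : Type*} [Field k] {ι : Type*} {n : ℕ} {ρ : ι → Matrix (Fin n) (Fin n) k}
  {Fil : ℕ → Submodule k (Fin n → k)}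

theorem stdFlag_le (hFil : IsAssociatedFiltration ρ Fil)
    (hρ : ∀ (v : ι) (i j : Fin n), j ≤ i → ρ v i j = 0) (i : ℕ) :
    stdFlag k n i ≤ Fil i := by
  induction i with
  | zero => rw [hFil.zero, stdFlag.zero_eq_bot]
  | succ i ih =>
    exact fun x hx => (hFil.mem_succ_iff i x).2 fun v => ih (stdFlag.mulVec_mem (hρ v) hx)

theorem le_stdFlag (hFil : IsAssociatedFiltration ρ Fil)
    (hρ : ∀ (v : ι) (i j : Fin n), j ≤ i → ρ v i j = 0)
    (hentry : ∀ (i : ℕ) (hi : i + 1 < n), ∃ v, ρ v ⟨i, hi.le⟩ ⟨i + 1, hi⟩ ≠ 0) :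
    ∀ i ≤ n, Fil i ≤ stdFlag k n i := by
  intro i
  induction i with
  | zero => intro _; rw [hFil.zero]; exact bot_le
  | succ i ih =>
    intro hin x hx
    have hρx : ∀ v, (ρ v).mulVec x ∈ stdFlag k n i :=
      fun v => ih (by omega) ((hFil.mem_succ_iff i x).1 hx v)
    refine stdFlag.mem_of_forall_lt hin fun m hm him hxm => ?_
    obtain ⟨m, rfl⟩ : ∃ m', m = m' + 1 := ⟨m - 1, by omega⟩
    obtain ⟨v, hv⟩ := hentry m hm
    have hvx := (stdFlag.mulVec_mem_iff (hρ v) hm hxm).1 (stdFlag.monotone (by omega) (hρx v))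
    exact (stdFlag.mem_succ_iff hm).2 ⟨hxm, (mul_eq_zero.1 hvx).resolve_left hv⟩

theorem exists_entry_ne_zero (hFil : IsAssociatedFiltration ρ Fil)
    (hρ : ∀ (v : ι) (i j : Fin n), j ≤ i → ρ v i j = 0)
    (hstd : ∀ i ≤ n, Fil i = stdFlag k n i) (i : ℕ) (hi : i + 1 < n) :
    ∃ v, ρ v ⟨i, hi.le⟩ ⟨i + 1, hi⟩ ≠ 0 := by
  by_contra! hzero
  let j : Fin n := ⟨i + 1, hi⟩
  have he : Pi.single j (1 : k) ∈ Fil (i + 1) := by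
    refine (hFil.mem_succ_iff i _).2 fun v => ?_
    rw [hstd i (by omega), stdFlag.mulVec_mem_iff (hρ v) hi (stdFlag.single_mem j 1), hzero v,
      zero_mul]
  rw [hstd (i + 1) hi.le] at he
  exact stdFlag.single_one_notMem j he

end IsAssociatedFiltration

/-- Let `r : g → n_n(k)` be a Lie algebra homomorphism into the strictly upper
triangular matrices, regarded as a representation of `g` on `k^n` (acting by `mulVec`).  Then the
associated filtration `Fil` (defined by `Fil 0 = 0` and
`Fil (i+1) = {x : ∀ v, (r v) x ∈ Fil i}`) equals the standard flag
`0 ⊂ k^1 ⊂ ⋯ ⊂ k^n`, i.e. `r` is a flag representation, if and only if the matrix-entry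
functional `λ_{i,i+1} : v ↦ (r v) i (i+1)` is nonzero for every `i = 1, …, n-1`. -/
theorem stmt_1 {k : Type*} [Field k] {g : Type*} [LieRing g] [LieAlgebra k g] {n : ℕ}
    (r : g →ₗ⁅k⁆ Matrix (Fin n) (Fin n) k)
    (hr : ∀ (v : g) (i j : Fin n), j ≤ i → r v i j = 0)
    (Fil : ℕ → Submodule k (Fin n → k))
    (hFil0 : Fil 0 = ⊥)
    (hFilS : ∀ (i : ℕ) (x : Fin n → k),
      x ∈ Fil (i + 1) ↔ ∀ v : g, (r v).mulVec x ∈ Fil i) :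
    (∀ i : ℕ, i ≤ n → Fil i = stdFlag k n i) ↔
      (∀ (i : ℕ) (hi : i + 1 < n), ∃ v : g, r v ⟨i, by omega⟩ ⟨i + 1, hi⟩ ≠ 0) := by
  have hFil : IsAssociatedFiltration (fun v => r v) Fil := ⟨hFil0, hFilS⟩
  exact ⟨hFil.exists_entry_ne_zero hr, fun hentry i hi =>
    le_antisymm (hFil.le_stdFlag hr hentry i hi) (hFil.stdFlag_le hr i)⟩
end

section
/- Let r : g → End(E) be a flag representation of a Lie algebra g over a field k on an n-dimensional vector space E, with associated filtration 0 = E_0 ⊂ E_1 ⊂ ⋯ ⊂ E_n = E. Then every subrepresentation of E, i.e. every k-subspace E' ⊆ E with r(v)(E') ⊆ E' for all v ∈ g, is equal to E_j for some 0 ≤ j ≤ n. Moreover each such subrepresentation r restricted to E_j is itself a flag representation, with associated filtration E_0 ⊂ E_1 ⊂ ⋯ ⊂ E_j. -/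
/-!
Since `Fil (i+1)` is the preimage of `Fil i` under all of `r`, an invariant subspace `W` with
`W ⊓ Fil (i+1) ≤ Fil i` satisfies `W ⊓ Fil m ≤ Fil i` for every `m`, hence
`W ≤ Fil i`. In a full flag `Fil (i+1)` covers `Fil i`, so if `Fil i ≤ W` and `W` is strictly
bigger, then `W ⊓ Fil (i+1)` cannot be `Fil i` and must be `Fil (i+1)`. Climbing this way
gives `W = Fil (finrank W)`. The restricted filtration agrees with `Fil` below `j` because
`Fil` is increasing.
-/

open Module

structure IsAssociatedFiltration_s3 {R M ι : Type*} [Ring R] [AddCommGroup M] [Module R M]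
    (ρ : ι → Module.End R M) (F : ℕ → Submodule R M) : Prop where
  zero : F 0 = ⊥
  mem_succ (i : ℕ) (x : M) : x ∈ F (i + 1) ↔ ∀ v, ρ v x ∈ F i

theorem Submodule.eq_or_eq_of_le_of_le_of_finrank_eq_succ {K V : Type*} [DivisionRing K]
    [AddCommGroup V] [Module K V] [FiniteDimensional K V] {A B C : Submodule K V}
    (hAC : A ≤ C) (hCB : C ≤ B) (hAB : finrank K B = finrank K A + 1) : C = A ∨ C = B := by
  have hA := Submodule.finrank_mono hAC
  have hB := Submodule.finrank_mono hCB
  by_cases hCA : finrank K C = finrank K A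
  · exact .inl (Submodule.eq_of_le_of_finrank_eq hAC hCA.symm).symm
  · exact .inr (Submodule.eq_of_le_of_finrank_eq hCB (by omega))

namespace IsAssociatedFiltration_s3

section Ring

variable {R M ι : Type*} [Ring R] [AddCommGroup M] [Module R M] {ρ : ι → Module.End R M}
  {F : ℕ → Submodule R M}

theorem monotone (hF : IsAssociatedFiltration_s3 ρ F) : Monotone F := by
  refine monotone_nat_of_le_succ fun i => ?_
  induction i with
  | zero => simp [hF.zero]
  | succ i ih => exact fun x hx => (hF.mem_succ _ x).2 fun v => ih ((hF.mem_succ _ x).1 hx v)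

theorem inf_le_of_inf_succ_le (hF : IsAssociatedFiltration_s3 ρ F) {W : Submodule R M}
    (hW : ∀ v, ∀ x ∈ W, ρ v x ∈ W) {i : ℕ} (h : W ⊓ F (i + 1) ≤ F i) (m : ℕ) :
    W ⊓ F m ≤ F i := by
  induction m with
  | zero => simp [hF.zero]
  | succ m ih =>
    rintro x ⟨hxW, hxm⟩
    exact h ⟨hxW, (hF.mem_succ i x).2 fun v => ih ⟨hW v x hxW, (hF.mem_succ m x).1 hxm v⟩⟩

theorem eq_of_restrict (hF : IsAssociatedFiltration_s3 ρ F) {j : ℕ} {F' : ℕ → Submodule R M}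
    (h'0 : F' 0 = ⊥) (h'S : ∀ (i : ℕ) (x : M), x ∈ F' (i + 1) ↔ x ∈ F j ∧ ∀ v, ρ v x ∈ F' i)
    {i : ℕ} (hij : i ≤ j) : F' i = F i := by
  induction i with
  | zero => rw [h'0, hF.zero]
  | succ i ih =>
    ext x
    rw [h'S, ih (by omega), hF.mem_succ]
    exact and_iff_right_of_imp fun hx => hF.monotone hij ((hF.mem_succ i x).2 hx)

end Ring

section Flag

variable {K M ι : Type*} [DivisionRing K] [AddCommGroup M] [Module K M] [FiniteDimensional K M]
  {ρ : ι → Module.End K M} {F : ℕ → Submodule K M} {n : ℕ}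

theorem succ_le_of_le (hF : IsAssociatedFiltration_s3 ρ F) (hdim : finrank K M = n)
    (hflag : ∀ i ≤ n, finrank K (F i) = i) {W : Submodule K M} (hW : ∀ v, ∀ x ∈ W, ρ v x ∈ W)
    {i : ℕ} (hiW : F i ≤ W) (hi : i < finrank K W) : F (i + 1) ≤ W := by
  have hin : i + 1 ≤ n := hdim ▸ (Submodule.finrank_le W).trans_lt' hi
  have htop : F n = ⊤ := Submodule.eq_top_of_finrank_eq (by rw [hflag n le_rfl, hdim])
  rcases Submodule.eq_or_eq_of_le_of_le_of_finrank_eq_succ (le_inf hiW (hF.monotone i.le_succ))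
    inf_le_right (by rw [hflag _ hin, hflag _ (by omega)]) with h | h
  · have hWi : W ≤ F i := by
      simpa [htop] using hF.inf_le_of_inf_succ_le hW h.le n
    have := Submodule.finrank_mono hWi
    rw [hflag i (by omega)] at this
    omega
  · exact h ▸ inf_le_left

theorem eq_finrank_of_invariant (hF : IsAssociatedFiltration_s3 ρ F) (hdim : finrank K M = n)
    (hflag : ∀ i ≤ n, finrank K (F i) = i) {W : Submodule K M}
    (hW : ∀ v, ∀ x ∈ W, ρ v x ∈ W) : W = F (finrank K W) := by
  have hle : ∀ i ≤ finrank K W, F i ≤ W := by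
    intro i hi
    induction i with
    | zero => simp [hF.zero]
    | succ i ih => exact hF.succ_le_of_le hdim hflag hW (ih (by omega)) (by omega)
  refine (Submodule.eq_of_le_of_finrank_eq (hle _ le_rfl) ?_).symm
  rw [hflag _ (hdim ▸ Submodule.finrank_le W)]

end Flag

end IsAssociatedFiltration_s3

attribute [local instance] LieRing.ofAssociativeRing

/-- Let `r : g → End(E)` be a flag representation of a Lie algebra `g` over a
field `k` on an `n`-dimensional vector space `E`, with associated filtration
`0 = Fil 0 ⊂ Fil 1 ⊂ ⋯ ⊂ Fil n = E` (a full flag).  Then (1) every subrepresentation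
`E' ⊆ E` equals `Fil j` for some `j ≤ n`, and (2) for every `j ≤ n` the restriction of `r`
to `Fil j` is itself a flag representation whose associated filtration (here `Fil'`, expressed
via submodules of `E`: `Fil' 0 = 0`,
`Fil' (i+1) = {x ∈ Fil j : ∀ v, r v x ∈ Fil' i}`) is `Fil 0 ⊂ Fil 1 ⊂ ⋯ ⊂ Fil j`. -/
theorem stmt_3 {k : Type*} [Field k] {g : Type*} [LieRing g] [LieAlgebra k g]
    {E : Type*} [AddCommGroup E] [Module k E] [FiniteDimensional k E] {n : ℕ}
    (r : g →ₗ⁅k⁆ Module.End k E)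
    (Fil : ℕ → Submodule k E)
    (hFil0 : Fil 0 = ⊥)
    (hFilS : ∀ (i : ℕ) (x : E), x ∈ Fil (i + 1) ↔ ∀ v : g, r v x ∈ Fil i)
    (hdim : Module.finrank k E = n)
    (hflag : ∀ i : ℕ, i ≤ n → Module.finrank k (Fil i) = i) :
    (∀ E' : Submodule k E, (∀ v : g, ∀ x ∈ E', r v x ∈ E') →
      ∃ j : ℕ, j ≤ n ∧ E' = Fil j) ∧
    (∀ j : ℕ, j ≤ n → ∀ Fil' : ℕ → Submodule k E,
      Fil' 0 = ⊥ →
      (∀ (i : ℕ) (x : E), x ∈ Fil' (i + 1) ↔ x ∈ Fil j ∧ ∀ v : g, r v x ∈ Fil' i) →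
      ∀ i : ℕ, i ≤ j → Fil' i = Fil i) := by
  have hF : IsAssociatedFiltration_s3 r Fil := ⟨hFil0, hFilS⟩
  refine ⟨fun E' hE' => ?_, fun j _ Fil' h'0 h'S i hij => hF.eq_of_restrict h'0 h'S hij⟩
  exact ⟨_, hdim ▸ Submodule.finrank_le E', hF.eq_finrank_of_invariant hdim hflag hE'⟩
end

section
/- Let g be a Lie algebra over a field k and let r : g → n_n(k) be a Lie algebra homomorphism. Let 1 ≤ i < j < m ≤ n, let u ∈ g^{(j−i)} and v ∈ g^{(m−j)}. Then λ_{i,m}([u,v]) = λ_{i,j}(u)·λ_{j,m}(v) − λ_{i,m−j+i}(v)·λ_{m−j+i,m}(u). -/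
attribute [local instance 100] LieRing.ofAssociativeRing

/-!
A matrix entry `(a, b)` of a product `A * B` is a sum of `A a l * B l b`. If `A` vanishes below
its `s`-th superdiagonal and `B` below its `t`-th, the product vanishes below its `(s + t)`-th,
and the entry `(i, i + s + t)` has the single surviving term `l = i + s`. Since `r` lands in the
strictly upper triangular matrices, induction on the lower central series shows that `r` maps
`g^{(s)}` into matrices vanishing below the `s`-th superdiagonal; both products `r u * r v` and
`r v * r u` in `r ⁅u, v⁆` then reduce at `(i, m)` to one term each.
-/

namespace Matrix

/-- `upperBand R n 1` is `n_n(R)`. -/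
def upperBand (R : Type*) [Semiring R] (n t : ℕ) : Submodule R (Matrix (Fin n) (Fin n) R) where
  carrier := {M | ∀ a b : Fin n, (b : ℕ) < a + t → M a b = 0}
  add_mem' hA hB a b hab := by rw [add_apply, hA a b hab, hB a b hab, add_zero]
  zero_mem' _ _ _ := rfl
  smul_mem' c _ hM a b hab := by rw [smul_apply, hM a b hab, smul_zero]

variable {R : Type*} {n : ℕ}

section Semiring

variable [Semiring R] {s t : ℕ} {A B : Matrix (Fin n) (Fin n) R}

theorem mul_apply_eq_single_of_mem_upperBand (hA : A ∈ upperBand R n s)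
    (hB : B ∈ upperBand R n t) {i j m : Fin n} (hij : (i : ℕ) + s = j) (hjm : (j : ℕ) + t = m) :
    (A * B) i m = A i j * B j m := by
  rw [mul_apply]
  refine Finset.sum_eq_single j (fun l _ hlj ↦ ?_) (absurd (Finset.mem_univ j))
  rcases lt_or_gt_of_ne (Fin.val_ne_of_ne hlj) with hl | hl
  · rw [hA i l (by omega), zero_mul]
  · rw [hB l m (by omega), mul_zero]

theorem mul_mem_upperBand (hA : A ∈ upperBand R n s) (hB : B ∈ upperBand R n t) :
    A * B ∈ upperBand R n (s + t) := by
  intro a b hab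
  rw [mul_apply]
  refine Finset.sum_eq_zero fun l _ ↦ ?_
  by_cases hl : (l : ℕ) < a + s
  · rw [hA a l hl, zero_mul]
  · rw [hB l b (by omega), mul_zero]

end Semiring

theorem lie_mem_upperBand [Ring R] {s t : ℕ} {A B : Matrix (Fin n) (Fin n) R}
    (hA : A ∈ upperBand R n s) (hB : B ∈ upperBand R n t) : ⁅A, B⁆ ∈ upperBand R n (s + t) :=
  Ring.lie_def A B ▸ sub_mem (mul_mem_upperBand hA hB) (add_comm t s ▸ mul_mem_upperBand hB hA)

end Matrix

open Matrix in
theorem LieHom.mem_upperBand_of_mem_lowerCentralSeries {R L : Type*} [CommRing R] [LieRing L]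
    [LieAlgebra R L] {n : ℕ} (r : L →ₗ⁅R⁆ Matrix (Fin n) (Fin n) R)
    (hr : ∀ x, r x ∈ upperBand R n 1) {t : ℕ} {w : L}
    (hw : w ∈ LieModule.lowerCentralSeries R L L t) : r w ∈ upperBand R n (t + 1) := by
  induction t generalizing w with
  | zero => exact hr w
  | succ t ih =>
    have hspan : w ∈ Submodule.span R
        {x | ∃ y ∈ (⊤ : LieIdeal R L), ∃ z ∈ LieModule.lowerCentralSeries R L L t, ⁅y, z⁆ = x} := by
      rw [← LieSubmodule.lieIdeal_oper_eq_linear_span', ← LieModule.lowerCentralSeries_succ]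
      exact hw
    refine (Submodule.span_le (p := (upperBand R n (t + 1 + 1)).comap r.toLinearMap)).2 ?_ hspan
    rintro _ ⟨y, -, z, hz, rfl⟩
    rw [SetLike.mem_coe, Submodule.mem_comap, LieHom.coe_toLinearMap, LieHom.map_lie]
    exact add_comm 1 (t + 1) ▸ lie_mem_upperBand (hr y) (ih hz)

/-- Let `r : g → n_n(k)` be a Lie algebra homomorphism into the strictly upper
triangular matrices.  Let `i < j < m` be indices, let `u ∈ g^{(j-i)}` and `v ∈ g^{(m-j)}`
(terms of the lower central series; note Mathlib's `lowerCentralSeries ⋯ 0 = g = g^{(1)}`, so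
`g^{(s)}` is `lowerCentralSeries ⋯ (s-1)`).  Then
`λ_{i,m}([u,v]) = λ_{i,j}(u)·λ_{j,m}(v) − λ_{i,m-j+i}(v)·λ_{m-j+i,m}(u)`. -/
theorem stmt_4 {k : Type*} [Field k] {g : Type*} [LieRing g] [LieAlgebra k g] {n : ℕ}
    (r : g →ₗ⁅k⁆ Matrix (Fin n) (Fin n) k)
    (hr : ∀ (v : g) (i j : Fin n), j ≤ i → r v i j = 0)
    (i j m : Fin n) (hij : (i : ℕ) < (j : ℕ)) (hjm : (j : ℕ) < (m : ℕ))
    (u v : g)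
    (hu : u ∈ LieModule.lowerCentralSeries k g g ((j : ℕ) - (i : ℕ) - 1))
    (hv : v ∈ LieModule.lowerCentralSeries k g g ((m : ℕ) - (j : ℕ) - 1)) :
    r ⁅u, v⁆ i m =
      r u i j * r v j m -
        r v i ⟨(m : ℕ) - (j : ℕ) + (i : ℕ), by have := m.isLt; omega⟩ *
          r u ⟨(m : ℕ) - (j : ℕ) + (i : ℕ), by have := m.isLt; omega⟩ m := by
  have hr' (x : g) : r x ∈ Matrix.upperBand k n 1 := fun a b hab ↦
    hr x a b (Fin.le_def.2 (by omega))
  have hu' := r.mem_upperBand_of_mem_lowerCentralSeries hr' hu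
  have hv' := r.mem_upperBand_of_mem_lowerCentralSeries hr' hv
  rw [LieHom.map_lie, Ring.lie_def, Matrix.sub_apply,
    Matrix.mul_apply_eq_single_of_mem_upperBand hu' hv' (j := j) (by omega) (by omega)]
  congr 1
  exact Matrix.mul_apply_eq_single_of_mem_upperBand hv' hu' (by simp only; omega)
    (by simp only; omega)
end

section
/- Let k be a field of characteristic 0 and let g be the Lie algebra whose underlying vector space is k^4 ⊕ k, with bracket [(v,a),(w,b)] = (0, v_1 w_2 − v_2 w_1 + v_3 w_4 − v_4 w_3). Then for every Lie algebra homomorphism r : g → n_3(k), the functionals λ_{1,2} and λ_{2,3} are linearly dependent (λ_{1,2} ∧ λ_{2,3} = 0). In particular g admits no wide 3-dimensional representation, i.e. no wide homomorphism g → n_3(k). -/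
/-!
The (1,3) entry (`Fin 3` index `0 2`) of `r ⁅x, y⁆` is `λ₁₂(x) λ₂₃(y) − λ₁₂(y) λ₂₃(x)`, while `⁅x, y⁆ = ω(x, y) z` for
the central element `z` and the standard symplectic form `ω` on `k⁴`. Hence `λ₁₂ ∧ λ₂₃ = c ω`
with `c` the (1,3) entry of `r z`. A decomposable 2-form satisfies the Plücker relation
`p₀₁ p₂₃ − p₀₂ p₁₃ + p₀₃ p₁₂ = 0`, which for `c ω` reads `c² = 0`; so `c = 0` and
`λ₁₂ ∧ λ₂₃ = 0`, i.e. the two functionals are linearly dependent.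
-/

attribute [local instance] LieRing.ofAssociativeRing

theorem Matrix.lie_apply_zero_two {R : Type*} [Ring R] (A B : Matrix (Fin 3) (Fin 3) R)
    (hA : ∀ i, A i i = 0) (hB : ∀ i, B i i = 0) :
    ⁅A, B⁆ 0 2 = A 0 1 * B 1 2 - B 0 1 * A 1 2 := by
  simp only [Ring.lie_def, Matrix.sub_apply, Matrix.mul_apply, Fin.sum_univ_three, hA, hB,
    zero_mul, mul_zero, zero_add, add_zero]

def symplecticForm {R : Type*} [CommRing R] (v w : Fin 4 → R) : R :=
  v 0 * w 1 - v 1 * w 0 + v 2 * w 3 - v 3 * w 2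

theorem eq_zero_of_wedge_eq_mul_symplecticForm {R : Type*} [CommRing R] [NoZeroDivisors R]
    (a b : Fin 4 → R) (c : R)
    (h : ∀ i j, a i * b j - a j * b i =
      symplecticForm (Pi.single i 1) (Pi.single j 1) * c) :
    c = 0 := by
  have h01 : a 0 * b 1 - a 1 * b 0 = c := by simpa [symplecticForm] using h 0 1
  have h23 : a 2 * b 3 - a 3 * b 2 = c := by simpa [symplecticForm] using h 2 3
  have h02 : a 0 * b 2 - a 2 * b 0 = 0 := by simpa [symplecticForm] using h 0 2
  have h03 : a 0 * b 3 - a 3 * b 0 = 0 := by simpa [symplecticForm] using h 0 3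
  have h12 : a 1 * b 2 - a 2 * b 1 = 0 := by simpa [symplecticForm] using h 1 2
  have h13 : a 1 * b 3 - a 3 * b 1 = 0 := by simpa [symplecticForm] using h 1 3
  have hc : c * c = 0 := by
    linear_combination (-(a 2 * b 3 - a 3 * b 2)) * h01 - c * h23
      + (a 1 * b 3 - a 3 * b 1) * h02 - (a 1 * b 2 - a 2 * b 1) * h03
  exact mul_self_eq_zero.mp hc

theorem exists_combination_eq_zero_of_wedge_eq_zero {X R : Type*} [CommRing R] [Nontrivial R]
    (f g : X → R) (h : ∀ x y, f x * g y - f y * g x = 0) :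
    ∃ a b : R, (a ≠ 0 ∨ b ≠ 0) ∧ ∀ x, a * f x + b * g x = 0 := by
  by_cases hf : ∀ x, f x = 0
  · exact ⟨1, 0, Or.inl one_ne_zero, fun x => by simp [hf x]⟩
  · obtain ⟨x₀, hx₀⟩ := not_forall.mp hf
    exact ⟨g x₀, -f x₀, Or.inr (neg_ne_zero.mpr hx₀), fun x => by
      linear_combination -h x₀ x⟩

section Heisenberg

variable {R : Type*} [CommRing R] {g : Type*} [LieRing g] [LieAlgebra R g]
  (e : g ≃ₗ[R] (Fin 4 → R) × R)
  (he : ∀ x y : g, e ⁅x, y⁆ = (0, symplecticForm (e x).1 (e y).1))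
include he

theorem lie_eq_symplecticForm_smul (x y : g) :
    ⁅x, y⁆ = symplecticForm (e x).1 (e y).1 • e.symm (0, 1) := by
  apply e.injective
  simp [he]

theorem superdiag_wedge_eq_symplecticForm_mul (r : g →ₗ⁅R⁆ Matrix (Fin 3) (Fin 3) R)
    (hr : ∀ v i, r v i i = 0) (x y : g) :
    r x 0 1 * r y 1 2 - r y 0 1 * r x 1 2 =
      symplecticForm (e x).1 (e y).1 * r (e.symm (0, 1)) 0 2 := by
  rw [← Matrix.lie_apply_zero_two _ _ (hr x) (hr y), ← LieHom.map_lie,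
    lie_eq_symplecticForm_smul e he, map_smul, Matrix.smul_apply, smul_eq_mul]

theorem superdiag_wedge_eq_zero [NoZeroDivisors R] (r : g →ₗ⁅R⁆ Matrix (Fin 3) (Fin 3) R)
    (hr : ∀ v i, r v i i = 0) (x y : g) :
    r x 0 1 * r y 1 2 - r y 0 1 * r x 1 2 = 0 := by
  set E : Fin 4 → g := fun i => e.symm (Pi.single i 1, 0)
  have hc : r (e.symm (0, 1)) 0 2 = 0 :=
    eq_zero_of_wedge_eq_mul_symplecticForm (fun i => r (E i) 0 1) (fun i => r (E i) 1 2) _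
      fun i j => by simpa [E] using superdiag_wedge_eq_symplecticForm_mul e he r hr (E i) (E j)
  rw [superdiag_wedge_eq_symplecticForm_mul e he r hr, hc, mul_zero]

end Heisenberg

/-- Let `k` be a field of characteristic `0` and let `g` be the Lie algebra
with underlying vector space `k^4 ⊕ k` and bracket
`[(v,a),(w,b)] = (0, v₁w₂ − v₂w₁ + v₃w₄ − v₄w₃)` (presented here by a linear isomorphism
`e : g ≃ (Fin 4 → k) × k` transporting the bracket to this formula).  Then for every Lie
algebra homomorphism `r : g → n_3(k)` the functionals `λ_{1,2}` and `λ_{2,3}` are linearly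
dependent; in particular `g` admits no wide homomorphism `g → n_3(k)`. -/
theorem stmt_10 {k : Type*} [Field k]
    {g : Type*} [LieRing g] [LieAlgebra k g]
    (e : g ≃ₗ[k] (Fin 4 → k) × k)
    (he : ∀ x y : g,
      e ⁅x, y⁆ =
        (0,
          (e x).1 0 * (e y).1 1 - (e x).1 1 * (e y).1 0 +
            (e x).1 2 * (e y).1 3 - (e x).1 3 * (e y).1 2))
    (r : g →ₗ⁅k⁆ Matrix (Fin 3) (Fin 3) k)
    (hr : ∀ (v : g) (i j : Fin 3), j ≤ i → r v i j = 0) :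
    (∃ a b : k, (a ≠ 0 ∨ b ≠ 0) ∧ ∀ v : g, a * r v 0 1 + b * r v 1 2 = 0) ∧
    ¬ ((∀ (i : ℕ) (hi : i + 1 < 3), ∃ v : g, r v ⟨i, by omega⟩ ⟨i + 1, hi⟩ ≠ 0) ∧
        ∀ a b : k, (∀ v : g, a * r v 0 1 + b * r v 1 2 = 0) → a = 0 ∧ b = 0) := by
  obtain ⟨a, b, hab, hdep⟩ := exists_combination_eq_zero_of_wedge_eq_zero _ _
    (superdiag_wedge_eq_zero e he r fun v i => hr v i i le_rfl)
  refine ⟨⟨a, b, hab, hdep⟩, fun ⟨_, hindep⟩ => ?_⟩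
  obtain ⟨rfl, rfl⟩ := hindep a b hdep
  simp at hab
end

section
/- Let g be a Lie algebra over a field k and let r, r' : g → n_2(k) be nonzero Lie algebra homomorphisms, with corresponding nonzero functionals λ = λ^r_{1,2} and λ' = λ^{r'}_{1,2} on g (both necessarily vanish on [g,g]). Then there exists b ∈ GL_2(k) with b·r(v)·b^{−1} = r'(v) for all v ∈ g if and only if λ' = c·λ for some c ∈ k^×. Consequently, GL_2(k)-conjugacy classes of nonzero homomorphisms g → n_2(k) are in bijection with lines in the dual space of g/[g,g]. (This is the field-point description of the isomorphism M^nd_2(g) ≅ P(g^ab).) -/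
/-!
A strictly upper triangular `2 × 2` matrix is `λ • E` with `E = single 0 1 1`, so a homomorphism
`r : g → n₂(k)` is `v ↦ λ v • E`, and `r ⁅x, y⁆ = λ x λ y ⁅E, E⁆ = 0`. Comparing the `(1,1)` and
`(0,1)` entries of `b (λ v • E) = (λ' v • E) b` at a `v` with `λ v ≠ 0` shows that `b` is upper
triangular and `λ' = (b₀₀ / b₁₁) λ`; conversely `diag(c, 1)` conjugates `λ • E` to `cλ • E`.
Finally `v ↦ μ v • E` is a Lie homomorphism whenever `μ` kills brackets.
-/

attribute [local instance 100] LieRing.ofAssociativeRing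

namespace Matrix

variable {k : Type*} [Field k]

theorem eq_smul_single_zero_one {M : Matrix (Fin 2) (Fin 2) k}
    (hM : ∀ i j : Fin 2, j ≤ i → M i j = 0) : M = M 0 1 • single 0 1 1 := by
  ext i j
  fin_cases i <;> fin_cases j <;> simp [hM]

theorem entries_of_mul_eq_mul {b M M' : Matrix (Fin 2) (Fin 2) k}
    (hM : ∀ i j : Fin 2, j ≤ i → M i j = 0) (hM' : ∀ i j : Fin 2, j ≤ i → M' i j = 0)
    (h : b * M = M' * b) : b 1 0 * M 0 1 = 0 ∧ b 0 0 * M 0 1 = M' 0 1 * b 1 1 := by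
  rw [eq_smul_single_zero_one hM, eq_smul_single_zero_one hM'] at h
  have h11 := congrFun (congrFun h 1) 1
  have h01 := congrFun (congrFun h 0) 1
  exact ⟨by simpa using h11, by simpa [mul_comm] using h01⟩

theorem diagonal_mul_eq_mul_diagonal {M M' : Matrix (Fin 2) (Fin 2) k}
    (hM : ∀ i j : Fin 2, j ≤ i → M i j = 0) (hM' : ∀ i j : Fin 2, j ≤ i → M' i j = 0)
    {c : k} (h : M' 0 1 = c * M 0 1) : diagonal ![c, 1] * M = M' * diagonal ![c, 1] := by
  rw [eq_smul_single_zero_one hM, eq_smul_single_zero_one hM', h]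
  ext i j
  fin_cases i <;> fin_cases j <;> simp [mul_comm]

theorem exists_units_of_mul_eq_mul {ι : Type*} {M M' : ι → Matrix (Fin 2) (Fin 2) k}
    (hM : ∀ v i j, j ≤ i → M v i j = 0) (hM' : ∀ v i j, j ≤ i → M' v i j = 0)
    (hM0 : ∃ v, M v 0 1 ≠ 0) {b : Matrix (Fin 2) (Fin 2) k} (hb : IsUnit b)
    (h : ∀ v, b * M v = M' v * b) : ∃ c : kˣ, ∀ v, M' v 0 1 = c * M v 0 1 := by
  obtain ⟨w, hw⟩ := hM0
  have hb10 : b 1 0 = 0 :=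
    (mul_eq_zero.mp (entries_of_mul_eq_mul (hM w) (hM' w) (h w)).1).resolve_right hw
  have hdet : b 0 0 * b 1 1 ≠ 0 := by
    simpa [isUnit_iff_isUnit_det, det_fin_two, hb10] using hb
  refine ⟨Units.mk0 _ (div_ne_zero (left_ne_zero_of_mul hdet) (right_ne_zero_of_mul hdet)),
    fun v => ?_⟩
  rw [Units.val_mk0, div_mul_eq_mul_div, (entries_of_mul_eq_mul (hM v) (hM' v) (h v)).2,
    mul_div_cancel_right₀ _ (right_ne_zero_of_mul hdet)]

end Matrix

section LieAlgebra

variable {k g L : Type*} [Field k] [LieRing g] [LieAlgebra k g] [LieRing L] [LieAlgebra k L]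

def LinearMap.smulRightLieHom (μ : g →ₗ[k] k) (hμ : ∀ x y : g, μ ⁅x, y⁆ = 0) (E : L) :
    g →ₗ⁅k⁆ L where
  toLinearMap := μ.smulRight E
  map_lie' {x y} := by simp [hμ, smul_lie, lie_smul]

theorem LinearMap.smulRightLieHom_apply (μ : g →ₗ[k] k) (hμ : ∀ x y : g, μ ⁅x, y⁆ = 0)
    (E : L) (v : g) : μ.smulRightLieHom hμ E v = μ v • E := rfl

theorem LieHom.lie_apply_zero_one_eq_zero (r : g →ₗ⁅k⁆ Matrix (Fin 2) (Fin 2) k)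
    (hr : ∀ (v : g) (i j : Fin 2), j ≤ i → r v i j = 0) (x y : g) : r ⁅x, y⁆ 0 1 = 0 := by
  rw [LieHom.map_lie, Matrix.eq_smul_single_zero_one (hr x),
    Matrix.eq_smul_single_zero_one (hr y), smul_lie, lie_smul, lie_self, smul_zero, smul_zero,
    Matrix.zero_apply]

end LieAlgebra

theorem stmt_12_general {k : Type*} [Field k] {g : Type*} [LieRing g] [LieAlgebra k g]
    (r r' : g →ₗ⁅k⁆ Matrix (Fin 2) (Fin 2) k)
    (hr : ∀ (v : g) (i j : Fin 2), j ≤ i → r v i j = 0)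
    (hr' : ∀ (v : g) (i j : Fin 2), j ≤ i → r' v i j = 0)
    (hr0 : ∃ v : g, r v 0 1 ≠ 0) :
    ((∃ b : Matrix (Fin 2) (Fin 2) k, IsUnit b ∧ ∀ v : g, b * r v = r' v * b) ↔
      ∃ c : kˣ, ∀ v : g, r' v 0 1 = (c : k) * r v 0 1) ∧
    (∀ x y : g, r ⁅x, y⁆ 0 1 = 0) ∧
    (∀ μ : g →ₗ[k] k, μ ≠ 0 → (∀ x y : g, μ ⁅x, y⁆ = 0) →
      ∃ s : g →ₗ⁅k⁆ Matrix (Fin 2) (Fin 2) k,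
        (∀ (v : g) (i j : Fin 2), j ≤ i → s v i j = 0) ∧ ∀ v : g, s v 0 1 = μ v) := by
  refine ⟨⟨?_, ?_⟩, r.lie_apply_zero_one_eq_zero hr, fun μ _ hμ => ?_⟩
  · rintro ⟨b, hb, hconj⟩
    exact Matrix.exists_units_of_mul_eq_mul hr hr' hr0 hb hconj
  · rintro ⟨c, hc⟩
    refine ⟨Matrix.diagonal ![(c : k), 1], ?_, fun v => Matrix.diagonal_mul_eq_mul_diagonal
      (hr v) (hr' v) (hc v)⟩
    simp [Matrix.isUnit_diagonal, Pi.isUnit_iff, Fin.forall_fin_two]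
  · refine ⟨μ.smulRightLieHom hμ (Matrix.single 0 1 1), fun v i j hij => ?_, fun v => ?_⟩
    · fin_cases i <;> fin_cases j <;> simp_all [LinearMap.smulRightLieHom_apply]
    · simp [LinearMap.smulRightLieHom_apply]

/-- Let `r, r' : g → n_2(k)` be nonzero Lie algebra homomorphisms into the
strictly upper triangular `2 × 2` matrices, with corresponding nonzero functionals
`λ = λ^r_{1,2}` and `λ' = λ^{r'}_{1,2}` (which necessarily vanish on `[g,g]`).  Then `r` and
`r'` are conjugate by some `b ∈ GL_2(k)` if and only if `λ' = c·λ` for some `c ∈ kˣ`.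
Moreover (surjectivity onto lines in the dual of `g/[g,g]`): every nonzero functional `μ`
vanishing on brackets arises as `λ^s_{1,2}` for some such homomorphism `s`.  Together these
give the bijection between conjugacy classes of nonzero homomorphisms `g → n_2(k)` and lines
in the dual space of `g/[g,g]`. -/
theorem stmt_12 {k : Type*} [Field k] {g : Type*} [LieRing g] [LieAlgebra k g]
    (r r' : g →ₗ⁅k⁆ Matrix (Fin 2) (Fin 2) k)
    (hr : ∀ (v : g) (i j : Fin 2), j ≤ i → r v i j = 0)
    (hr' : ∀ (v : g) (i j : Fin 2), j ≤ i → r' v i j = 0)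
    (hr0 : ∃ v : g, r v 0 1 ≠ 0)
    (hr'0 : ∃ v : g, r' v 0 1 ≠ 0) :
    ((∃ b : Matrix (Fin 2) (Fin 2) k, IsUnit b ∧ ∀ v : g, b * r v = r' v * b) ↔
      ∃ c : kˣ, ∀ v : g, r' v 0 1 = (c : k) * r v 0 1) ∧
    (∀ x y : g, r ⁅x, y⁆ 0 1 = 0) ∧
    (∀ μ : g →ₗ[k] k, μ ≠ 0 → (∀ x y : g, μ ⁅x, y⁆ = 0) →
      ∃ s : g →ₗ⁅k⁆ Matrix (Fin 2) (Fin 2) k,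
        (∀ (v : g) (i j : Fin 2), j ≤ i → s v i j = 0) ∧ ∀ v : g, s v 0 1 = μ v) :=
  stmt_12_general r r' hr hr' hr0
end

section
/- Let B' be a Noetherian commutative ring, let B be a commutative B'-algebra, let N' be a finitely generated B'-module, and let n' ∈ N' be an element such that 1_B ⊗ n' = 0 in B ⊗_{B'} N'. Then there exists a B'-subalgebra B'' of B which is of finite type over B' and such that 1_{B''} ⊗ n' = 0 in B'' ⊗_{B'} N'. -/
open scoped TensorProduct

/-!
Present `N'` as a quotient of a free module `F` by `K`, and lift `x` to `v : F`. Right exactness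
of `B ⊗ -` writes `1 ⊗ v ∈ B ⊗ F` as the image of some `y ∈ B ⊗ K`; only finitely many elements
of `B` occur in `y`, so `y` already comes from `A ⊗ K` for a finitely generated subalgebra `A`.
Since `F` is flat, `A ⊗ F → B ⊗ F` is injective, so `1 ⊗ v` comes from `A ⊗ K` already in
`A ⊗ F`, and hence `1 ⊗ x = 0` in `A ⊗ N'`.
-/

open LinearMap

theorem Subalgebra.exists_fg_mem_range_rTensor_val {R B M : Type*} [CommSemiring R] [Semiring B]
    [Algebra R B] [AddCommMonoid M] [Module R M] (t : B ⊗[R] M) :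
    ∃ A : Subalgebra R B, A.FG ∧ t ∈ range (A.val.toLinearMap.rTensor M) := by
  obtain ⟨_, ⟨s, rfl⟩, y, rfl⟩ := Submodule.exists_fg_le_eq_rTensor_subtype (R := R) t
  refine ⟨Algebra.adjoin R s, Subalgebra.fg_adjoin_finset s,
    rTensor M (Submodule.inclusion (Algebra.span_le_adjoin R _)) y, ?_⟩
  rw [← rTensor_comp_apply]
  rfl

theorem stmt_14_general {B' : Type*} [CommRing B']
    {B : Type*} [CommRing B] [Algebra B' B]
    {N' : Type*} [AddCommGroup N'] [Module B' N']
    (x : N') (h : (1 : B) ⊗ₜ[B'] x = (0 : B ⊗[B'] N')) :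
    ∃ A : Subalgebra B' B, A.FG ∧ (1 : A) ⊗ₜ[B'] x = (0 : A ⊗[B'] N') := by
  let π : (N' →₀ B') →ₗ[B'] N' := Finsupp.linearCombination B' id
  have hπ : Function.Surjective π := Finsupp.linearCombination_id_surjective B' N'
  obtain ⟨v, rfl⟩ := hπ x
  obtain ⟨y, hy⟩ := (lTensor_exact (M := ker π) B π.exact_subtype_ker_map hπ ((1 : B) ⊗ₜ v)).mp h
  obtain ⟨A, hA, z, rfl⟩ := Subalgebra.exists_fg_mem_range_rTensor_val y
  refine ⟨A, hA, ?_⟩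
  have hlift : lTensor A (ker π).subtype z = (1 : A) ⊗ₜ v := by
    apply Module.Flat.rTensor_preserves_injective_linearMap A.val.toLinearMap Subtype.val_injective
    rw [rTensor_tmul, AlgHom.toLinearMap_apply, map_one, ← hy, ← comp_apply, rTensor_comp_lTensor,
      ← lTensor_comp_rTensor, comp_apply]
  rw [← lTensor_tmul, ← hlift, ← lTensor_comp_apply,
    (exact_subtype_ker_map π).linearMap_comp_eq_zero, lTensor_zero, LinearMap.zero_apply]

/-- Let `B'` be a Noetherian commutative ring, `B` a commutative
`B'`-algebra, `N'` a finitely generated `B'`-module and `x ∈ N'` with `1 ⊗ x = 0` in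
`B ⊗_{B'} N'`.  Then there is a finite-type `B'`-subalgebra `A ⊆ B` with `1 ⊗ x = 0` already
in `A ⊗_{B'} N'`. -/
theorem stmt_14 {B' : Type*} [CommRing B'] [IsNoetherianRing B']
    {B : Type*} [CommRing B] [Algebra B' B]
    {N' : Type*} [AddCommGroup N'] [Module B' N'] [Module.Finite B' N']
    (x : N') (h : (1 : B) ⊗ₜ[B'] x = (0 : B ⊗[B'] N')) :
    ∃ A : Subalgebra B' B, A.FG ∧ (1 : A) ⊗ₜ[B'] x = (0 : A ⊗[B'] N') :=
  stmt_14_general x h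
end

section
/- Let B' be a Noetherian commutative ring, let B be a commutative B'-algebra, let Q' be a finitely presented B'-module and N' a finitely generated B'-module, and let σ : B ⊗_{B'} Q' → B ⊗_{B'} N' be a B-linear map. Then there exists a B'-subalgebra B'' ⊆ B of finite type over B' and a B''-linear map σ'' : B'' ⊗_{B'} Q' → B'' ⊗_{B'} N' such that σ is obtained from σ'' by base change along B'' → B, i.e. σ = id_B ⊗_{B''} σ''. -/
/-!
A `B`-linear `σ` is the base change of the `B'`-linear map `φ = σ (1 ⊗ₜ ·) : Q' → B ⊗ N'`.
Every element of `B ⊗ N'` comes from `A ⊗ N'` for some finite-type subalgebra `A`, and an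
element of `A ⊗ N'` vanishing in `B ⊗ N'` already vanishes in `A' ⊗ N'` for a larger
finite-type `A'`. As `Q'` is given by finitely many generators and finitely many relations,
`φ` therefore factors through `A ⊗ N'` for one finite-type `A`; the base change of this
factorisation to `A` is `σ''`.
-/

open scoped TensorProduct
open LinearMap

theorem Function.Exact.exists_comp_eq_of_comp_eq_zero {R M N P Q : Type*} [Ring R]
    [AddCommGroup M] [Module R M] [AddCommGroup N] [Module R N] [AddCommGroup P] [Module R P]
    [AddCommGroup Q] [Module R Q] {f : M →ₗ[R] N} {g : N →ₗ[R] P} (hfg : Function.Exact f g)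
    (hg : Function.Surjective g) {h : N →ₗ[R] Q} (hf : h ∘ₗ f = 0) :
    ∃ ψ : P →ₗ[R] Q, ψ ∘ₗ g = h := by
  refine ⟨(range f).liftQ h ?_ ∘ₗ (hfg.linearEquivOfSurjective hg).symm.toLinearMap,
    ext fun n => ?_⟩
  · rw [range_le_ker_iff, hf]
  · simp

namespace Subalgebra

section Semiring

variable {R S : Type*} [CommSemiring R] [Semiring S] [Algebra R S]

theorem fg_iSup {ι : Type*} [Finite ι] (A : ι → Subalgebra R S) (hA : ∀ i, (A i).FG) :
    (⨆ i, A i).FG := by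
  choose s hs using hA
  rw [fg_def]
  refine ⟨⋃ i, (s i : Set S), Set.finite_iUnion fun i => (s i).finite_toSet, ?_⟩
  simp only [Algebra.adjoin_iUnion, hs]

theorem exists_fg_le_forall_of_monotone {ι : Type*} [Finite ι] {A : Subalgebra R S} (hA : A.FG)
    {P : ι → Subalgebra R S → Prop} (hP : ∀ i, Monotone (P i)) (h : ∀ i, ∃ B, B.FG ∧ P i B) :
    ∃ B, A ≤ B ∧ B.FG ∧ ∀ i, P i B := by
  choose B hB hPB using h
  exact ⟨A ⊔ ⨆ i, B i, le_sup_left, hA.sup (fg_iSup B hB),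
    fun i => hP i ((le_iSup B i).trans le_sup_right) (hPB i)⟩

variable {N : Type*} [AddCommMonoid N] [Module R N]

theorem rTensor_val_comp_rTensor_inclusion {A B : Subalgebra R S} (h : A ≤ B) :
    rTensor N B.val.toLinearMap ∘ₗ rTensor N (inclusion h).toLinearMap =
      rTensor N A.val.toLinearMap := by
  rw [← rTensor_comp]; rfl

theorem rTensor_inclusion_trans {A B C : Subalgebra R S} (hAB : A ≤ B) (hBC : B ≤ C) :
    rTensor N (inclusion (hAB.trans hBC)).toLinearMap =
      rTensor N (inclusion hBC).toLinearMap ∘ₗ rTensor N (inclusion hAB).toLinearMap := by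
  rw [← rTensor_comp]; rfl

theorem range_rTensor_val_mono {A B : Subalgebra R S} (h : A ≤ B) :
    range (rTensor N A.val.toLinearMap) ≤ range (rTensor N B.val.toLinearMap) := by
  rw [← rTensor_val_comp_rTensor_inclusion h]
  exact range_comp_le_range _ _

theorem exists_fg_lift_of_pi {ι : Type*} [Finite ι] (f : (ι → R) →ₗ[R] S ⊗[R] N) :
    ∃ A : Subalgebra R S, A.FG ∧
      ∃ g : (ι → R) →ₗ[R] A ⊗[R] N, rTensor N A.val.toLinearMap ∘ₗ g = f := by
  obtain ⟨A, -, hA, hf⟩ := exists_fg_le_forall_of_monotone fg_bot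
    (P := fun i A => f (Pi.basisFun R ι i) ∈ range (rTensor N A.val.toLinearMap))
    (fun _ _ _ h hf => range_rTensor_val_mono h hf)
    (fun _ => TensorProduct.Algebra.exists_of_fg _)
  choose g hg using hf
  exact ⟨A, hA, (Pi.basisFun R ι).constr R g, (Pi.basisFun R ι).ext fun i => by simp [hg]⟩

theorem exists_fg_rTensor_inclusion_comp_eq_zero {ι : Type*} [Finite ι] {A : Subalgebra R S}
    (hA : A.FG) (g : (ι → R) →ₗ[R] A ⊗[R] N) (hg : rTensor N A.val.toLinearMap ∘ₗ g = 0) :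
    ∃ B, ∃ hAB : A ≤ B, B.FG ∧ rTensor N (inclusion hAB).toLinearMap ∘ₗ g = 0 := by
  obtain ⟨B, hAB, hB, hg⟩ := exists_fg_le_forall_of_monotone hA
    (P := fun i B => ∃ hAB : A ≤ B,
      rTensor N (inclusion hAB).toLinearMap (g (Pi.basisFun R ι i)) = 0)
    (fun i B B' hBB' ⟨hAB, h⟩ => ⟨hAB.trans hBB', by
      rw [rTensor_inclusion_trans hAB hBB', comp_apply, h, map_zero]⟩)
    (fun i => by
      obtain ⟨B, hAB, hB, h⟩ := TensorProduct.Algebra.eq_of_fg_of_subtype_eq hA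
        (t := g (Pi.basisFun R ι i)) (t' := 0) (by simpa using congr($hg (Pi.basisFun R ι i)))
      exact ⟨B, hB, hAB, by simpa using h⟩)
  exact ⟨B, hAB, hB, (Pi.basisFun R ι).ext fun i => by simpa using (hg i).2⟩

theorem rTensor_val_smul (A : Subalgebra R S) (a : A) (z : A ⊗[R] N) :
    rTensor N A.val.toLinearMap (a • z) = (a : S) • rTensor N A.val.toLinearMap z := by
  induction z using TensorProduct.induction_on with
  | zero => simp
  | tmul b n => simp [TensorProduct.smul_tmul']
  | add u v hu hv => simp only [smul_add, map_add, hu, hv]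

end Semiring

section CommSemiring

variable {R S Q N : Type*} [CommSemiring R] [CommSemiring S] [Algebra R S]
    [AddCommMonoid Q] [Module R Q] [AddCommMonoid N] [Module R N]

theorem apply_rTensor_val_eq_rTensor_val_liftBaseChange {A : Subalgebra R S}
    {σ : S ⊗[R] Q →ₗ[S] S ⊗[R] N} {ψ : Q →ₗ[R] A ⊗[R] N}
    (hψ : ∀ q, rTensor N A.val.toLinearMap (ψ q) = σ (1 ⊗ₜ q)) (x : A ⊗[R] Q) :
    σ (rTensor Q A.val.toLinearMap x) = rTensor N A.val.toLinearMap (ψ.liftBaseChange A x) := by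
  induction x using TensorProduct.induction_on with
  | zero => simp
  | tmul a q =>
    rw [rTensor_tmul, liftBaseChange_tmul, rTensor_val_smul, hψ, ← map_smul,
      TensorProduct.smul_tmul', smul_eq_mul, mul_one]
    rfl
  | add u v hu hv => rw [map_add, map_add, hu, hv, map_add, map_add]

end CommSemiring

end Subalgebra

namespace Module.FinitePresentation

variable {R S M N : Type*} [CommRing R] [Ring S] [Algebra R S] [AddCommGroup M] [Module R M]
  [AddCommGroup N] [Module R N]

theorem exists_fg_subalgebra_lift [Module.FinitePresentation R M] (φ : M →ₗ[R] S ⊗[R] N) :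
    ∃ A : Subalgebra R S, A.FG ∧
      ∃ ψ : M →ₗ[R] A ⊗[R] N, rTensor N A.val.toLinearMap ∘ₗ ψ = φ := by
  obtain ⟨n, m, p, r, hp, hexact⟩ := exists_fin' R M
  obtain ⟨A, hA, g, hg⟩ := Subalgebra.exists_fg_lift_of_pi (φ ∘ₗ p)
  have hgr : rTensor N A.val.toLinearMap ∘ₗ g ∘ₗ r = 0 := by
    rw [← comp_assoc, hg, comp_assoc, hexact.linearMap_comp_eq_zero, comp_zero]
  obtain ⟨B, hAB, hB, hB0⟩ := Subalgebra.exists_fg_rTensor_inclusion_comp_eq_zero hA _ hgr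
  obtain ⟨ψ, hψ⟩ := hexact.exists_comp_eq_of_comp_eq_zero hp
    (h := rTensor N (Subalgebra.inclusion hAB).toLinearMap ∘ₗ g) (by rw [comp_assoc, hB0])
  refine ⟨B, hB, ψ, (cancel_right hp).mp ?_⟩
  rw [comp_assoc, hψ, ← comp_assoc, Subalgebra.rTensor_val_comp_rTensor_inclusion, hg]

end Module.FinitePresentation

theorem stmt_15_general {B' : Type*} [CommRing B']
    {B : Type*} [CommRing B] [Algebra B' B]
    {Q' : Type*} [AddCommGroup Q'] [Module B' Q'] [Module.FinitePresentation B' Q']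
    {N' : Type*} [AddCommGroup N'] [Module B' N']
    (σ : B ⊗[B'] Q' →ₗ[B] B ⊗[B'] N') :
    ∃ A : Subalgebra B' B, A.FG ∧
      ∃ σ'' : (A ⊗[B'] Q') →ₗ[A] (A ⊗[B'] N'),
        ∀ q : A ⊗[B'] Q',
          σ (LinearMap.rTensor Q' A.val.toLinearMap q) =
            LinearMap.rTensor N' A.val.toLinearMap (σ'' q) := by
  obtain ⟨A, hA, ψ, hψ⟩ := Module.FinitePresentation.exists_fg_subalgebra_lift
    (σ.restrictScalars B' ∘ₗ TensorProduct.mk B' B Q' 1)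
  exact ⟨A, hA, ψ.liftBaseChange A,
    Subalgebra.apply_rTensor_val_eq_rTensor_val_liftBaseChange fun q => congr($hψ q)⟩

/-- Let `B'` be a Noetherian commutative ring, `B` a commutative
`B'`-algebra, `Q'` a finitely presented `B'`-module, `N'` a finitely generated `B'`-module,
and `σ : B ⊗_{B'} Q' → B ⊗_{B'} N'` a `B`-linear map.  Then there is a finite-type
`B'`-subalgebra `A ⊆ B` and an `A`-linear map `σ'' : A ⊗_{B'} Q' → A ⊗_{B'} N'` from which
`σ` is obtained by base change, i.e. `σ` and `σ''` commute with the canonical maps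
`A ⊗_{B'} Q' → B ⊗_{B'} Q'` and `A ⊗_{B'} N' → B ⊗_{B'} N'` (which determines
`σ = id_B ⊗_A σ''` by `B`-linearity). -/
theorem stmt_15 {B' : Type*} [CommRing B'] [IsNoetherianRing B']
    {B : Type*} [CommRing B] [Algebra B' B]
    {Q' : Type*} [AddCommGroup Q'] [Module B' Q'] [Module.FinitePresentation B' Q']
    {N' : Type*} [AddCommGroup N'] [Module B' N'] [Module.Finite B' N']
    (σ : B ⊗[B'] Q' →ₗ[B] B ⊗[B'] N') :
    ∃ A : Subalgebra B' B, A.FG ∧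
      ∃ σ'' : (A ⊗[B'] Q') →ₗ[A] (A ⊗[B'] N'),
        ∀ q : A ⊗[B'] Q',
          σ (LinearMap.rTensor Q' A.val.toLinearMap q) =
            LinearMap.rTensor N' A.val.toLinearMap (σ'' q) :=
  stmt_15_general σ
end

section
/- Let B be a commutative ℚ-algebra, F a B-module, and n a natural number. Set B_n = B[T]/(T^{n+1}) and C_n = B[ε_1,…,ε_n]/(ε_1^2,…,ε_n^2), and let α̃ : B_n → C_n be the B-algebra homomorphism determined by T ↦ ε_1 + ⋯ + ε_n. Then the induced map α : Aut_{B_n}(B_n ⊗_B F) → Aut_{C_n}(C_n ⊗_B F), sending a B_n-linear automorphism φ of B_n ⊗_B F to its base change C_n ⊗_{B_n} φ, is injective. -/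
/-!
Over `ℚ` the map `α` has a `B`-linear left inverse `β`, hence so does `α ⊗ id_F`, which is
therefore injective; and `φ, ψ` with `(α ⊗ id) ∘ φ = (α ⊗ id) ∘ ψ` must then agree.
Since the `ε i` square to zero, `α (t ^ k) = (∑ ε i) ^ k = k! • ∑_{|S| = k} ε_S`, so `β` may send
each squarefree monomial `ε_S` to `t ^ |S|` divided by `|S|! * (n choose |S|)`.
-/

open scoped TensorProduct

open Finset

namespace Finset

variable {ι R M : Type*} [DecidableEq ι]

theorem prod_mul_sum_eq_sum_sdiff_prod_insert [CommSemiring R] {ε : ι → R} {S : Finset ι}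
    (hε : ∀ i ∈ S, ε i ^ 2 = 0) (s : Finset ι) :
    (∏ i ∈ S, ε i) * ∑ j ∈ s, ε j = ∑ j ∈ s \ S, ∏ i ∈ insert j S, ε i := by
  rw [mul_sum, ← sum_subset sdiff_subset fun j _ hj => ?_]
  · refine sum_congr rfl fun j hj => ?_
    rw [prod_insert (mem_sdiff.mp hj).2, mul_comm]
  · have hjS : j ∈ S := by simp_all
    rw [← prod_erase_mul S ε hjS, mul_assoc, ← sq, hε j hjS, mul_zero]

theorem sum_powersetCard_sum_sdiff_insert [AddCommMonoid M] (s : Finset ι) (k : ℕ)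
    (f : Finset ι → M) :
    ∑ S ∈ s.powersetCard k, ∑ j ∈ s \ S, f (insert j S) =
      (k + 1) • ∑ T ∈ s.powersetCard (k + 1), f T := by
  have hreindex : ∑ S ∈ s.powersetCard k, ∑ j ∈ s \ S, f (insert j S) =
      ∑ T ∈ s.powersetCard (k + 1), ∑ _j ∈ T, f T := by
    rw [sum_sigma', sum_sigma']
    refine sum_nbij' (fun p => ⟨insert p.2 p.1, p.2⟩) (fun q => ⟨q.1.erase q.2, q.2⟩)
      ?_ ?_ ?_ ?_ fun _ _ => rfl
    · rintro ⟨S, j⟩ hp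
      simp only [mem_sigma, mem_powersetCard, mem_sdiff] at hp ⊢
      obtain ⟨⟨hSs, hcard⟩, hjs, hjS⟩ := hp
      exact ⟨⟨insert_subset hjs hSs, by rw [card_insert_of_notMem hjS, hcard]⟩, mem_insert_self _ _⟩
    · rintro ⟨T, j⟩ hq
      simp only [mem_sigma, mem_powersetCard, mem_sdiff] at hq ⊢
      obtain ⟨⟨hTs, hcard⟩, hjT⟩ := hq
      exact ⟨⟨(erase_subset _ _).trans hTs, by rw [card_erase_of_mem hjT, hcard]; rfl⟩,
        hTs hjT, notMem_erase _ _⟩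
    · rintro ⟨S, j⟩ hp
      simp only [mem_sigma, mem_sdiff] at hp
      simp [erase_insert hp.2.2]
    · rintro ⟨T, j⟩ hq
      simp only [mem_sigma] at hq
      simp [insert_erase hq.2]
  rw [hreindex, smul_sum]
  exact sum_congr rfl fun T hT => by rw [sum_const, (mem_powersetCard.mp hT).2]

theorem sum_pow_of_sq_eq_zero [CommSemiring R] (s : Finset ι) {ε : ι → R}
    (hε : ∀ i ∈ s, ε i ^ 2 = 0) (k : ℕ) :
    (∑ i ∈ s, ε i) ^ k = k.factorial * ∑ S ∈ s.powersetCard k, ∏ i ∈ S, ε i := by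
  induction k with
  | zero => simp
  | succ k ih =>
    have hstep : (∑ S ∈ s.powersetCard k, ∏ i ∈ S, ε i) * ∑ j ∈ s, ε j =
        (k + 1) • ∑ T ∈ s.powersetCard (k + 1), ∏ i ∈ T, ε i := by
      rw [sum_mul, ← sum_powersetCard_sum_sdiff_insert]
      refine sum_congr rfl fun S hS => prod_mul_sum_eq_sum_sdiff_prod_insert (fun i hi => ?_) s
      exact hε i ((mem_powersetCard.mp hS).1 hi)
    rw [pow_succ, ih, mul_assoc, hstep, nsmul_eq_mul, Nat.factorial_succ]
    push_cast
    ring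

end Finset

theorem TensorProduct.map_injective_of_comp_eq_id {R M N P : Type*} [CommSemiring R]
    [AddCommMonoid M] [AddCommMonoid N] [AddCommMonoid P] [Module R M] [Module R N] [Module R P]
    {f : M →ₗ[R] N} {g : N →ₗ[R] M} (hgf : g ∘ₗ f = LinearMap.id) :
    Function.Injective (TensorProduct.map f (LinearMap.id : P →ₗ[R] P)) :=
  Function.LeftInverse.injective (g := TensorProduct.map g LinearMap.id) fun x => by
    rw [← LinearMap.comp_apply, ← TensorProduct.map_comp, hgf, LinearMap.comp_id,
      TensorProduct.map_id, LinearMap.id_apply]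

theorem exists_comp_eq_id_of_apply_eq_sum_of_sq_eq_zero {B Bn Cn : Type*} [CommRing B]
    [Algebra ℚ B] [CommRing Bn] [Algebra B Bn] [CommRing Cn] [Algebra B Cn] {n : ℕ}
    {t : Bn} {bB : Module.Basis (Fin (n + 1)) B Bn} (hbB : ∀ i : Fin (n + 1), bB i = t ^ (i : ℕ))
    {ε : Fin n → Cn} (hε : ∀ i : Fin n, ε i ^ 2 = 0) {bC : Module.Basis (Finset (Fin n)) B Cn}
    (hbC : ∀ S : Finset (Fin n), bC S = ∏ i ∈ S, ε i) {α : Bn →ₐ[B] Cn}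
    (hα : α t = ∑ i : Fin n, ε i) :
    ∃ β : Cn →ₗ[B] Bn, β ∘ₗ α.toLinearMap = LinearMap.id := by
  let c : ℕ → B := fun k => algebraMap ℚ B ((k.factorial * n.choose k : ℕ) : ℚ)⁻¹
  refine ⟨bC.constr B fun S => c S.card • t ^ S.card, bB.ext fun i => ?_⟩
  have hi : (i : ℕ) ≤ n := Nat.lt_succ_iff.mp i.isLt
  have hαt : α (t ^ (i : ℕ)) = (i : ℕ).factorial • ∑ S ∈ univ.powersetCard i, bC S := by
    simp only [map_pow, hα, sum_pow_of_sq_eq_zero univ fun i _ => hε i, hbC, nsmul_eq_mul]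
  have hβ : ∀ S ∈ (univ : Finset (Fin n)).powersetCard i,
      bC.constr B (fun S => c S.card • t ^ S.card) (bC S) = c i • t ^ (i : ℕ) := fun S hS => by
    rw [Module.Basis.constr_basis, (mem_powersetCard.mp hS).2]
  have hc : ((i : ℕ).factorial * n.choose i : ℕ) • c i = 1 := by
    have hpos : (((i : ℕ).factorial * n.choose i : ℕ) : ℚ) ≠ 0 := by
      have := Nat.choose_pos hi
      positivity
    rw [← Nat.cast_smul_eq_nsmul ℚ, Algebra.smul_def, ← map_mul, mul_inv_cancel₀ hpos, map_one]
  simp only [LinearMap.comp_apply, AlgHom.toLinearMap_apply, LinearMap.id_apply, hbB, hαt,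
    map_nsmul, map_sum]
  rw [sum_congr rfl hβ, sum_const, card_powersetCard, card_univ, Fintype.card_fin, smul_smul,
    ← smul_assoc, hc, one_smul]

theorem stmt_17_general {B : Type*} [CommRing B] [Algebra ℚ B] {n : ℕ}
    {Bn : Type*} [CommRing Bn] [Algebra B Bn]
    {Cn : Type*} [CommRing Cn] [Algebra B Cn]
    (t : Bn) (bB : Module.Basis (Fin (n + 1)) B Bn)
    (hbB : ∀ i : Fin (n + 1), bB i = t ^ (i : ℕ))
    (ε : Fin n → Cn) (hε : ∀ i : Fin n, ε i ^ 2 = 0)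
    (bC : Module.Basis (Finset (Fin n)) B Cn)
    (hbC : ∀ S : Finset (Fin n), bC S = ∏ i ∈ S, ε i)
    (α : Bn →ₐ[B] Cn) (hα : α t = ∑ i : Fin n, ε i)
    {F : Type*} [AddCommGroup F] [Module B F]
    (φ ψ : (Bn ⊗[B] F) ≃ₗ[Bn] (Bn ⊗[B] F))
    (hφψ : ∀ x : Bn ⊗[B] F,
      TensorProduct.map α.toLinearMap (LinearMap.id : F →ₗ[B] F) (φ x) =
        TensorProduct.map α.toLinearMap (LinearMap.id : F →ₗ[B] F) (ψ x)) :
    φ = ψ := by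
  obtain ⟨β, hβα⟩ := exists_comp_eq_id_of_apply_eq_sum_of_sq_eq_zero hbB hε hbC hα
  exact LinearEquiv.ext fun x => TensorProduct.map_injective_of_comp_eq_id hβα (hφψ x)

/-- Let `B` be a commutative `ℚ`-algebra, `F` a `B`-module and `n ∈ ℕ`.
Let `Bn` be (a `B`-algebra presenting) `B[T]/(T^{n+1})`: it has a basis `1, t, …, t^n` over `B`
with `t^{n+1} = 0`.  Let `Cn` be `B[ε₁,…,ε_n]/(ε₁²,…,ε_n²)`: it has a basis over `B` indexed
by the subsets `S ⊆ {1,…,n}`, given by the squarefree monomials `∏_{i ∈ S} ε_i`, with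
`ε_i² = 0`.  Let `α : Bn → Cn` be the `B`-algebra map with `α t = ε₁ + ⋯ + ε_n`.  Then the
induced map on automorphism groups `Aut_{Bn}(Bn ⊗_B F) → Aut_{Cn}(Cn ⊗_B F)` is injective:
two `Bn`-linear automorphisms `φ, ψ` of `Bn ⊗_B F` with the same base change along `α`
(equivalently, with `(α ⊗ id) ∘ φ = (α ⊗ id) ∘ ψ`, which determines the base change on the
generators of `Cn ⊗_B F` over `Cn`) are equal. -/
theorem stmt_17 {B : Type*} [CommRing B] [Algebra ℚ B] {n : ℕ}
    {Bn : Type*} [CommRing Bn] [Algebra B Bn]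
    {Cn : Type*} [CommRing Cn] [Algebra B Cn]
    (t : Bn) (bB : Module.Basis (Fin (n + 1)) B Bn)
    (hbB : ∀ i : Fin (n + 1), bB i = t ^ (i : ℕ))
    (htn : t ^ (n + 1) = 0)
    (ε : Fin n → Cn) (hε : ∀ i : Fin n, ε i ^ 2 = 0)
    (bC : Module.Basis (Finset (Fin n)) B Cn)
    (hbC : ∀ S : Finset (Fin n), bC S = ∏ i ∈ S, ε i)
    (α : Bn →ₐ[B] Cn) (hα : α t = ∑ i : Fin n, ε i)
    {F : Type*} [AddCommGroup F] [Module B F]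
    (φ ψ : (Bn ⊗[B] F) ≃ₗ[Bn] (Bn ⊗[B] F))
    (hφψ : ∀ x : Bn ⊗[B] F,
      TensorProduct.map α.toLinearMap (LinearMap.id : F →ₗ[B] F) (φ x) =
        TensorProduct.map α.toLinearMap (LinearMap.id : F →ₗ[B] F) (ψ x)) :
    φ = ψ :=
  stmt_17_general t bB hbB ε hε bC hbC α hα φ ψ hφψ
end
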